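/- arXiv:2405.08318 — 2 statements merged into one kernel-verified Lean document; each statement's English description precedes it below -/
import Mathlib

section
/- (Deterministic core of Lemma roi: the region of interest contains the Nash equilibrium.) If the confidence bounds are valid and x* ∈ X is a pure Nash equilibrium, then x* belongs to the region of interest ROI = {x ∈ X : LCB_f(x) ≤ min( min_{x' ∈ X} UCB_f(x'), 0 )}. -/
/-- The partial maximum `max_{x'_i ∈ X_i} g(x'_i, x_{-i})`. -/
noncomputable def pmax {I : Type*} [DecidableEq I] {X : I → Type*}
    [∀ i, Fintype (X i)] [∀ i, Nonempty (X i)]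
    (g : (∀ j, X j) → ℝ) (i : I) (x : ∀ j, X j) : ℝ :=
  Finset.univ.sup' Finset.univ_nonempty (fun x' : X i => g (Function.update x i x'))

/-- Upper confidence bound for the loss:
`UCB_f(x) = Σ_i ( max_{x'_i} U_i(x'_i, x_{-i}) − L_i(x) )`. -/
noncomputable def UCBf {I : Type*} [Fintype I] [DecidableEq I] {X : I → Type*}
    [∀ i, Fintype (X i)] [∀ i, Nonempty (X i)]
    (U L : I → (∀ j, X j) → ℝ) (x : ∀ j, X j) : ℝ :=
  ∑ i, (pmax (U i) i x - L i x)

/-- Lower confidence bound for the loss: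
`LCB_f(x) = Σ_i ( max_{x'_i} L_i(x'_i, x_{-i}) − U_i(x) )`. -/
noncomputable def LCBf {I : Type*} [Fintype I] [DecidableEq I] {X : I → Type*}
    [∀ i, Fintype (X i)] [∀ i, Nonempty (X i)]
    (U L : I → (∀ j, X j) → ℝ) (x : ∀ j, X j) : ℝ :=
  ∑ i, (pmax (L i) i x - U i x)

/-- The loss function `f(x) = Σ_i ( max_{x'_i ∈ X_i} u_i(x'_i, x_{-i}) − u_i(x) )`. -/
noncomputable def loss {I : Type*} [Fintype I] [DecidableEq I] {X : I → Type*}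
    [∀ i, Fintype (X i)] [∀ i, Nonempty (X i)]
    (u : I → (∀ j, X j) → ℝ) (x : ∀ j, X j) : ℝ :=
  ∑ i, (pmax (u i) i x - u i x)

/-! At a Nash equilibrium `x*` the loss vanishes, and the loss is nonnegative everywhere. Valid
confidence bounds sandwich the loss, `LCB_f ≤ f ≤ UCB_f`, so
`LCB_f(x*) ≤ f(x*) = 0 ≤ f(x') ≤ UCB_f(x')` for every profile `x'`. -/

section Game

variable {I : Type*} [DecidableEq I] {X : I → Type*}

def IsPureNash (u : I → (∀ j, X j) → ℝ) (x : ∀ j, X j) : Prop :=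
  ∀ i, ∀ x' : X i, u i (Function.update x i x') ≤ u i x

variable [∀ i, Fintype (X i)] [∀ i, Nonempty (X i)]

theorem le_pmax_update (g : (∀ j, X j) → ℝ) (i : I) (x : ∀ j, X j) (x' : X i) :
    g (Function.update x i x') ≤ pmax g i x :=
  Finset.le_sup' (fun y : X i => g (Function.update x i y)) (Finset.mem_univ x')

theorem le_pmax (g : (∀ j, X j) → ℝ) (i : I) (x : ∀ j, X j) : g x ≤ pmax g i x := by
  simpa using le_pmax_update g i x (x i)

theorem pmax_le_iff {g : (∀ j, X j) → ℝ} {i : I} {x : ∀ j, X j} {c : ℝ} :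
    pmax g i x ≤ c ↔ ∀ x' : X i, g (Function.update x i x') ≤ c := by
  simp [pmax, Finset.sup'_le_iff]

theorem pmax_mono {g h : (∀ j, X j) → ℝ} (hgh : ∀ x, g x ≤ h x) (i : I) (x : ∀ j, X j) :
    pmax g i x ≤ pmax h i x :=
  pmax_le_iff.2 fun x' => (hgh _).trans (le_pmax_update h i x x')

variable [Fintype I]

theorem loss_nonneg (u : I → (∀ j, X j) → ℝ) (x : ∀ j, X j) : 0 ≤ loss u x :=
  Finset.sum_nonneg fun i _ => sub_nonneg.2 (le_pmax (u i) i x)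

theorem loss_eq_zero_of_isPureNash {u : I → (∀ j, X j) → ℝ} {x : ∀ j, X j}
    (hx : IsPureNash u x) : loss u x = 0 :=
  Finset.sum_eq_zero fun i _ => sub_eq_zero.2 <|
    (pmax_le_iff.2 (hx i)).antisymm (le_pmax (u i) i x)

variable {u U L : I → (∀ j, X j) → ℝ}

theorem LCBf_le_loss (hLu : ∀ i x, L i x ≤ u i x) (huU : ∀ i x, u i x ≤ U i x)
    (x : ∀ j, X j) : LCBf U L x ≤ loss u x :=
  Finset.sum_le_sum fun i _ => sub_le_sub (pmax_mono (hLu i) i x) (huU i x)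

theorem loss_le_UCBf (hLu : ∀ i x, L i x ≤ u i x) (huU : ∀ i x, u i x ≤ U i x)
    (x : ∀ j, X j) : loss u x ≤ UCBf U L x :=
  Finset.sum_le_sum fun i _ => sub_le_sub (pmax_mono (huU i) i x) (hLu i x)

end Game

theorem nash_in_roi_general
    {I : Type*} [Fintype I] [DecidableEq I]
    {X : I → Type*} [∀ i, Fintype (X i)] [∀ i, Nonempty (X i)]
    (u U L : I → (∀ j, X j) → ℝ)
    (hvalid : ∀ (i : I) (x : ∀ j, X j), L i x ≤ u i x ∧ u i x ≤ U i x)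
    (xstar : ∀ j, X j)
    (hne : ∀ i : I, ∀ x' : X i, u i (Function.update xstar i x') ≤ u i xstar) :
    xstar ∈ {x : ∀ j, X j |
      LCBf U L x ≤ min (Finset.univ.inf' Finset.univ_nonempty (UCBf U L)) 0} := by
  have hLu : ∀ i x, L i x ≤ u i x := fun i x => (hvalid i x).1
  have huU : ∀ i x, u i x ≤ U i x := fun i x => (hvalid i x).2
  have hLCB : LCBf U L xstar ≤ 0 :=
    (LCBf_le_loss hLu huU xstar).trans (loss_eq_zero_of_isPureNash hne).le
  have hUCB : ∀ x, 0 ≤ UCBf U L x := fun x => (loss_nonneg u x).trans (loss_le_UCBf hLu huU x)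
  exact le_min (Finset.le_inf' _ _ fun x _ => hLCB.trans (hUCB x)) hLCB

/-- Deterministic core of Lemma roi: if the confidence bounds are valid and `x*` is a
pure Nash equilibrium, then `x*` belongs to the region of interest
`ROI = {x ∈ X : LCB_f(x) ≤ min( min_{x'} UCB_f(x'), 0 )}`. -/
theorem nash_in_roi
    {I : Type*} [Fintype I] [Nonempty I] [DecidableEq I]
    {X : I → Type*} [∀ i, Fintype (X i)] [∀ i, Nonempty (X i)]
    (u U L : I → (∀ j, X j) → ℝ)
    (hvalid : ∀ (i : I) (x : ∀ j, X j), L i x ≤ u i x ∧ u i x ≤ U i x)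
    (xstar : ∀ j, X j)
    (hne : ∀ i : I, ∀ x' : X i, u i (Function.update xstar i x') ≤ u i xstar) :
    xstar ∈ {x : ∀ j, X j |
      LCBf U L x ≤ min (Finset.univ.inf' Finset.univ_nonempty (UCBf U L)) 0} :=
  nash_in_roi_general u U L hvalid xstar hne
end

section
/- (Deterministic core of Theorem eNE: small acquisition width on the ROI yields an ε-Nash equilibrium.) Let ε ≥ 0. If the confidence bounds are valid and x ∈ X satisfies LCB_f(x) ≤ 0 and acq(x) ≤ ε, then x is an ε-Nash equilibrium. -/
/-- Deterministic core of Theorem eNE: if `ε ≥ 0`, the confidence bounds are valid,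
`LCB_f(x) ≤ 0` and `acq(x) = UCB_f(x) − LCB_f(x) ≤ ε`, then `x` is an ε-Nash
equilibrium. -/
theorem small_acq_on_roi_implies_eps_nash
    {I : Type*} [Fintype I] [Nonempty I] [DecidableEq I]
    {X : I → Type*} [∀ i, Fintype (X i)] [∀ i, Nonempty (X i)]
    (u U L : I → (∀ j, X j) → ℝ)
    (ε : ℝ) (hε : 0 ≤ ε)
    (hvalid : ∀ (i : I) (x : ∀ j, X j), L i x ≤ u i x ∧ u i x ≤ U i x)
    (x : ∀ j, X j) (hroi : LCBf U L x ≤ 0)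
    (hacq : UCBf U L x - LCBf U L x ≤ ε) :
    ∀ i : I, pmax (u i) i x - u i x ≤ ε := by
  intro i
  have hself : ∀ (g : I → (∀ j, X j) → ℝ) (j : I), g j x ≤ pmax (g j) j x := by
    intro g j
    have := Finset.le_sup' (fun x' : X j => g j (Function.update x j x'))
      (Finset.mem_univ (x j))
    simp only [Function.update_eq_self] at this
    exact this
  have hterm : ∀ j : I, (0:ℝ) ≤ pmax (U j) j x - L j x := by
    intro j
    have h1 := (hvalid j x).1
    have h2 := (hvalid j x).2
    have := hself U j
    linarith
  have hUCB : UCBf U L x ≤ ε := by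
    have : (0:ℝ) ≤ -LCBf U L x := by linarith
    unfold UCBf at *
    linarith
  have hsingle : pmax (U i) i x - L i x ≤ UCBf U L x := by
    unfold UCBf
    exact Finset.single_le_sum (fun j _ => hterm j) (Finset.mem_univ i)
  have hmono : pmax (u i) i x ≤ pmax (U i) i x := by
    apply Finset.sup'_le
    intro b _
    exact le_trans ((hvalid i _).2)
      (Finset.le_sup' (fun x' : X i => U i (Function.update x i x')) (Finset.mem_univ b))
  have := (hvalid i x).1
  linarith
end
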